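/- Let (A_k, B_k), k ≥ 1, be the softImpute-ALS iterates and define η_k := (1/2)(‖(A_k − A_{k+1})B_kᵀ‖_F² + ‖A_{k+1}(B_k − B_{k+1})ᵀ‖_F²) + (λ/2)(‖A_k − A_{k+1}‖_F² + ‖B_k − B_{k+1}‖_F²). Then the decreasing sequence F(A_k,B_k) converges to some limit f^∞ ≥ 0, η_k → 0 as k → ∞, and for every K ≥ 1, min_{1 ≤ k ≤ K} η_k ≤ (F(A₁,B₁) − f^∞)/K. -/
import Mathlib


noncomputable section

open Matrix Filter

/-- Squared Frobenius norm of a real matrix. -/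
def frobSq {m n : ℕ} (M : Matrix (Fin m) (Fin n) ℝ) : ℝ := ∑ i, ∑ j, (M i j) ^ 2

/-- `P_Ω`: keep the entries in `Ω`, zero out the rest. -/
def proj {m n : ℕ} (Ω : Finset (Fin m × Fin n)) (Y : Matrix (Fin m) (Fin n) ℝ) :
    Matrix (Fin m) (Fin n) ℝ := Matrix.of fun i j => if (i, j) ∈ Ω then Y i j else 0

/-- `P_Ω^⊥`: zero out the entries in `Ω`, keep the rest. -/
def projPerp {m n : ℕ} (Ω : Finset (Fin m × Fin n)) (Y : Matrix (Fin m) (Fin n) ℝ) :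
    Matrix (Fin m) (Fin n) ℝ := Matrix.of fun i j => if (i, j) ∈ Ω then 0 else Y i j

/-- `F(A,B) = (1/2)‖P_Ω(X − ABᵀ)‖_F² + (λ/2)(‖A‖_F² + ‖B‖_F²)`. -/
def Fobj {m n r : ℕ} (Ω : Finset (Fin m × Fin n)) (X : Matrix (Fin m) (Fin n) ℝ) (lam : ℝ)
    (A : Matrix (Fin m) (Fin r) ℝ) (B : Matrix (Fin n) (Fin r) ℝ) : ℝ :=
  (1 / 2) * frobSq (proj Ω (X - A * Bᵀ)) + (lam / 2) * (frobSq A + frobSq B)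

/-- `Q_A(Z₁|A,B)`. -/
def QA {m n r : ℕ} (Ω : Finset (Fin m × Fin n)) (X : Matrix (Fin m) (Fin n) ℝ) (lam : ℝ)
    (Z₁ : Matrix (Fin m) (Fin r) ℝ) (A : Matrix (Fin m) (Fin r) ℝ)
    (B : Matrix (Fin n) (Fin r) ℝ) : ℝ :=
  (1 / 2) * frobSq (proj Ω (X - Z₁ * Bᵀ) + projPerp Ω (A * Bᵀ - Z₁ * Bᵀ)) +
    (lam / 2) * frobSq Z₁ + (lam / 2) * frobSq B

/-- `Q_B(Z₂|A,B)`. -/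
def QB {m n r : ℕ} (Ω : Finset (Fin m × Fin n)) (X : Matrix (Fin m) (Fin n) ℝ) (lam : ℝ)
    (Z₂ : Matrix (Fin n) (Fin r) ℝ) (A : Matrix (Fin m) (Fin r) ℝ)
    (B : Matrix (Fin n) (Fin r) ℝ) : ℝ :=
  (1 / 2) * frobSq (proj Ω (X - A * Z₂ᵀ) + projPerp Ω (A * Bᵀ - A * Z₂ᵀ)) +
    (lam / 2) * frobSq A + (lam / 2) * frobSq Z₂

/-- `(A_k, B_k)` are softImpute-ALS iterates: `A_{k+1} ∈ argmin Q_A(·|A_k,B_k)` and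
`B_{k+1} ∈ argmin Q_B(·|A_{k+1},B_k)`. -/
def SoftImputeALS {m n r : ℕ} (Ω : Finset (Fin m × Fin n)) (X : Matrix (Fin m) (Fin n) ℝ)
    (lam : ℝ) (A : ℕ → Matrix (Fin m) (Fin r) ℝ) (B : ℕ → Matrix (Fin n) (Fin r) ℝ) : Prop :=
  ∀ k : ℕ,
    (∀ Z₁ : Matrix (Fin m) (Fin r) ℝ,
      QA Ω X lam (A (k + 1)) (A k) (B k) ≤ QA Ω X lam Z₁ (A k) (B k)) ∧
    (∀ Z₂ : Matrix (Fin n) (Fin r) ℝ,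
      QB Ω X lam (B (k + 1)) (A (k + 1)) (B k) ≤ QB Ω X lam Z₂ (A (k + 1)) (B k))

/-! ### Auxiliary lemmas -/

/-- Frobenius inner product. -/
def frobInner {m n : ℕ} (M N : Matrix (Fin m) (Fin n) ℝ) : ℝ := ∑ i, ∑ j, M i j * N i j

lemma frobSq_nonneg {m n : ℕ} (M : Matrix (Fin m) (Fin n) ℝ) : 0 ≤ frobSq M :=
  Finset.sum_nonneg fun _ _ => Finset.sum_nonneg fun _ _ => sq_nonneg _

lemma frobSq_sub_smul {m n : ℕ} (P M : Matrix (Fin m) (Fin n) ℝ) (t : ℝ) :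
    frobSq (P - t • M) = frobSq P - 2 * t * frobInner P M + t ^ 2 * frobSq M := by
  simp only [frobSq, frobInner, Matrix.sub_apply, Matrix.smul_apply, smul_eq_mul,
    Finset.mul_sum, ← Finset.sum_add_distrib, ← Finset.sum_sub_distrib]
  refine Finset.sum_congr rfl fun i _ => ?_
  refine Finset.sum_congr rfl fun j _ => ?_
  ring

lemma frobSq_add_smul {m n : ℕ} (P M : Matrix (Fin m) (Fin n) ℝ) (t : ℝ) :
    frobSq (P + t • M) = frobSq P + 2 * t * frobInner P M + t ^ 2 * frobSq M := by
  have h := frobSq_sub_smul P M (-t)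
  simp only [neg_smul, sub_neg_eq_add] at h
  rw [h]; ring

lemma frobSq_proj_add_projPerp {m n : ℕ} (Ω : Finset (Fin m × Fin n))
    (Y W : Matrix (Fin m) (Fin n) ℝ) :
    frobSq (proj Ω Y + projPerp Ω W) = frobSq (proj Ω Y) + frobSq (projPerp Ω W) := by
  simp only [frobSq, Matrix.add_apply, ← Finset.sum_add_distrib]
  refine Finset.sum_congr rfl fun i _ => ?_
  refine Finset.sum_congr rfl fun j _ => ?_
  by_cases h : (i, j) ∈ Ω <;> simp [proj, projPerp, h]

lemma projPerp_zero {m n : ℕ} (Ω : Finset (Fin m × Fin n)) : projPerp Ω (0 : Matrix (Fin m) (Fin n) ℝ) = 0 := by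
  ext i j; simp [projPerp]

lemma linear_zero_of_quad_nonneg (b c : ℝ) (hc : 0 ≤ c)
    (h : ∀ t : ℝ, 0 ≤ t * b + t ^ 2 * c) : b = 0 := by
  by_contra hb
  have hc1 : (0:ℝ) < c + 1 := by linarith
  set t := -b / (c + 1) with ht
  have e : t * (c + 1) = -b := div_mul_cancel₀ _ (ne_of_gt hc1)
  have h2 : 0 ≤ (t * b + t ^ 2 * c) * ((c + 1) * (c + 1)) :=
    mul_nonneg (h t) (by positivity)
  have h3 : (t * b + t ^ 2 * c) * ((c + 1) * (c + 1))
      = (t * (c + 1)) * b * (c + 1) + (t * (c + 1)) ^ 2 * c := by ring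
  rw [h3, e] at h2
  have hb2 : 0 < b ^ 2 := by
    rcases lt_or_gt_of_ne hb with h | h <;> nlinarith
  nlinarith

/-! ### The A-update -/

lemma residA {m n r : ℕ} (Ω : Finset (Fin m × Fin n)) (X : Matrix (Fin m) (Fin n) ℝ)
    (A Z D : Matrix (Fin m) (Fin r) ℝ) (B : Matrix (Fin n) (Fin r) ℝ) (t : ℝ) :
    proj Ω (X - (Z + t • D) * Bᵀ) + projPerp Ω (A * Bᵀ - (Z + t • D) * Bᵀ)
      = (proj Ω (X - Z * Bᵀ) + projPerp Ω (A * Bᵀ - Z * Bᵀ)) - t • (D * Bᵀ) := by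
  have hmul : (Z + t • D) * Bᵀ = Z * Bᵀ + t • (D * Bᵀ) := by
    rw [Matrix.add_mul, Matrix.smul_mul]
  ext i j
  simp only [hmul, proj, projPerp, Matrix.add_apply, Matrix.sub_apply, Matrix.smul_apply,
    Matrix.of_apply, smul_eq_mul]
  by_cases h : (i, j) ∈ Ω <;> simp [h] <;> ring

lemma QA_line {m n r : ℕ} (Ω : Finset (Fin m × Fin n)) (X : Matrix (Fin m) (Fin n) ℝ)
    (lam : ℝ) (Z D A : Matrix (Fin m) (Fin r) ℝ) (B : Matrix (Fin n) (Fin r) ℝ) (t : ℝ) :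
    QA Ω X lam (Z + t • D) A B = QA Ω X lam Z A B
      + t * (lam * frobInner Z D
        - frobInner (proj Ω (X - Z * Bᵀ) + projPerp Ω (A * Bᵀ - Z * Bᵀ)) (D * Bᵀ))
      + t ^ 2 * ((1 / 2) * frobSq (D * Bᵀ) + (lam / 2) * frobSq D) := by
  unfold QA
  rw [residA, frobSq_sub_smul, frobSq_add_smul]
  ring

lemma QA_gap {m n r : ℕ} (Ω : Finset (Fin m × Fin n)) (X : Matrix (Fin m) (Fin n) ℝ)
    (lam : ℝ) (hlam : 0 ≤ lam) (A Zs : Matrix (Fin m) (Fin r) ℝ)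
    (B : Matrix (Fin n) (Fin r) ℝ)
    (hmin : ∀ Z, QA Ω X lam Zs A B ≤ QA Ω X lam Z A B)
    (Z : Matrix (Fin m) (Fin r) ℝ) :
    QA Ω X lam Z A B = QA Ω X lam Zs A B
      + (1 / 2) * frobSq ((Z - Zs) * Bᵀ) + (lam / 2) * frobSq (Z - Zs) := by
  set D := Z - Zs with hD
  set b := lam * frobInner Zs D
    - frobInner (proj Ω (X - Zs * Bᵀ) + projPerp Ω (A * Bᵀ - Zs * Bᵀ)) (D * Bᵀ) with hb
  set c := (1 / 2) * frobSq (D * Bᵀ) + (lam / 2) * frobSq D with hc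
  have hcn : 0 ≤ c := add_nonneg (mul_nonneg (by norm_num) (frobSq_nonneg _))
    (mul_nonneg (by linarith) (frobSq_nonneg _))
  have hb0 : b = 0 := by
    refine linear_zero_of_quad_nonneg b c hcn fun t => ?_
    have h1 := hmin (Zs + t • D)
    rw [QA_line Ω X lam Zs D A B t, ← hb, ← hc] at h1
    linarith
  have h1 := QA_line Ω X lam Zs D A B 1
  have hZ : Zs + (1 : ℝ) • D = Z := by rw [one_smul, hD]; abel
  rw [hZ] at h1
  rw [h1, ← hb, hb0]
  ring

/-! ### The B-update -/

lemma residB {m n r : ℕ} (Ω : Finset (Fin m × Fin n)) (X : Matrix (Fin m) (Fin n) ℝ)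
    (A : Matrix (Fin m) (Fin r) ℝ) (B Z D : Matrix (Fin n) (Fin r) ℝ) (t : ℝ) :
    proj Ω (X - A * (Z + t • D)ᵀ) + projPerp Ω (A * Bᵀ - A * (Z + t • D)ᵀ)
      = (proj Ω (X - A * Zᵀ) + projPerp Ω (A * Bᵀ - A * Zᵀ)) - t • (A * Dᵀ) := by
  have hmul : A * (Z + t • D)ᵀ = A * Zᵀ + t • (A * Dᵀ) := by
    rw [Matrix.transpose_add, Matrix.transpose_smul, Matrix.mul_add, Matrix.mul_smul]
  ext i j
  simp only [hmul, proj, projPerp, Matrix.add_apply, Matrix.sub_apply, Matrix.smul_apply,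
    Matrix.of_apply, smul_eq_mul]
  by_cases h : (i, j) ∈ Ω <;> simp [h] <;> ring

lemma QB_line {m n r : ℕ} (Ω : Finset (Fin m × Fin n)) (X : Matrix (Fin m) (Fin n) ℝ)
    (lam : ℝ) (Z D : Matrix (Fin n) (Fin r) ℝ) (A : Matrix (Fin m) (Fin r) ℝ)
    (B : Matrix (Fin n) (Fin r) ℝ) (t : ℝ) :
    QB Ω X lam (Z + t • D) A B = QB Ω X lam Z A B
      + t * (lam * frobInner Z D
        - frobInner (proj Ω (X - A * Zᵀ) + projPerp Ω (A * Bᵀ - A * Zᵀ)) (A * Dᵀ))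
      + t ^ 2 * ((1 / 2) * frobSq (A * Dᵀ) + (lam / 2) * frobSq D) := by
  unfold QB
  rw [residB, frobSq_sub_smul, frobSq_add_smul]
  ring

lemma QB_gap {m n r : ℕ} (Ω : Finset (Fin m × Fin n)) (X : Matrix (Fin m) (Fin n) ℝ)
    (lam : ℝ) (hlam : 0 ≤ lam) (A : Matrix (Fin m) (Fin r) ℝ)
    (B Zs : Matrix (Fin n) (Fin r) ℝ)
    (hmin : ∀ Z, QB Ω X lam Zs A B ≤ QB Ω X lam Z A B)
    (Z : Matrix (Fin n) (Fin r) ℝ) :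
    QB Ω X lam Z A B = QB Ω X lam Zs A B
      + (1 / 2) * frobSq (A * (Z - Zs)ᵀ) + (lam / 2) * frobSq (Z - Zs) := by
  set D := Z - Zs with hD
  set b := lam * frobInner Zs D
    - frobInner (proj Ω (X - A * Zsᵀ) + projPerp Ω (A * Bᵀ - A * Zsᵀ)) (A * Dᵀ) with hb
  set c := (1 / 2) * frobSq (A * Dᵀ) + (lam / 2) * frobSq D with hc
  have hcn : 0 ≤ c := add_nonneg (mul_nonneg (by norm_num) (frobSq_nonneg _))
    (mul_nonneg (by linarith) (frobSq_nonneg _))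
  have hb0 : b = 0 := by
    refine linear_zero_of_quad_nonneg b c hcn fun t => ?_
    have h1 := hmin (Zs + t • D)
    rw [QB_line Ω X lam Zs D A B t, ← hb, ← hc] at h1
    linarith
  have h1 := QB_line Ω X lam Zs D A B 1
  have hZ : Zs + (1 : ℝ) • D = Z := by rw [one_smul, hD]; abel
  rw [hZ] at h1
  rw [h1, ← hb, hb0]
  ring

/-! ### Relation to `Fobj` -/

lemma QA_ge_F {m n r : ℕ} (Ω : Finset (Fin m × Fin n)) (X : Matrix (Fin m) (Fin n) ℝ)
    (lam : ℝ) (Z A : Matrix (Fin m) (Fin r) ℝ) (B : Matrix (Fin n) (Fin r) ℝ) :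
    Fobj Ω X lam Z B ≤ QA Ω X lam Z A B := by
  unfold QA Fobj
  rw [frobSq_proj_add_projPerp]
  have := frobSq_nonneg (projPerp Ω (A * Bᵀ - Z * Bᵀ))
  linarith

lemma QB_ge_F {m n r : ℕ} (Ω : Finset (Fin m × Fin n)) (X : Matrix (Fin m) (Fin n) ℝ)
    (lam : ℝ) (Z : Matrix (Fin n) (Fin r) ℝ) (A : Matrix (Fin m) (Fin r) ℝ)
    (B : Matrix (Fin n) (Fin r) ℝ) :
    Fobj Ω X lam A Z ≤ QB Ω X lam Z A B := by
  unfold QB Fobj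
  rw [frobSq_proj_add_projPerp]
  have := frobSq_nonneg (projPerp Ω (A * Bᵀ - A * Zᵀ))
  linarith

lemma QA_self {m n r : ℕ} (Ω : Finset (Fin m × Fin n)) (X : Matrix (Fin m) (Fin n) ℝ)
    (lam : ℝ) (A : Matrix (Fin m) (Fin r) ℝ) (B : Matrix (Fin n) (Fin r) ℝ) :
    QA Ω X lam A A B = Fobj Ω X lam A B := by
  unfold QA Fobj
  rw [sub_self, projPerp_zero, add_zero]
  ring

lemma QB_self {m n r : ℕ} (Ω : Finset (Fin m × Fin n)) (X : Matrix (Fin m) (Fin n) ℝ)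
    (lam : ℝ) (A : Matrix (Fin m) (Fin r) ℝ) (B : Matrix (Fin n) (Fin r) ℝ) :
    QB Ω X lam B A B = Fobj Ω X lam A B := by
  unfold QB Fobj
  rw [sub_self, projPerp_zero, add_zero]
  ring

lemma Fobj_nonneg {m n r : ℕ} (Ω : Finset (Fin m × Fin n)) (X : Matrix (Fin m) (Fin n) ℝ)
    (lam : ℝ) (hlam : 0 ≤ lam) (A : Matrix (Fin m) (Fin r) ℝ)
    (B : Matrix (Fin n) (Fin r) ℝ) : 0 ≤ Fobj Ω X lam A B := by
  unfold Fobj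
  have h1 := frobSq_nonneg (proj Ω (X - A * Bᵀ))
  have h2 := frobSq_nonneg A
  have h3 := frobSq_nonneg B
  nlinarith

theorem softImputeALS_convergence_rate {m n r : ℕ} (Ω : Finset (Fin m × Fin n))
    (X : Matrix (Fin m) (Fin n) ℝ) (lam : ℝ) (hlam : 0 ≤ lam)
    (A : ℕ → Matrix (Fin m) (Fin r) ℝ) (B : ℕ → Matrix (Fin n) (Fin r) ℝ)
    (hALS : SoftImputeALS Ω X lam A B) :
    let η : ℕ → ℝ := fun k =>
      (1 / 2) * (frobSq ((A k - A (k + 1)) * (B k)ᵀ) +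
          frobSq (A (k + 1) * (B k - B (k + 1))ᵀ)) +
      (lam / 2) * (frobSq (A k - A (k + 1)) + frobSq (B k - B (k + 1)))
    ∃ finf : ℝ, 0 ≤ finf ∧
      Antitone (fun k => Fobj Ω X lam (A k) (B k)) ∧
      Tendsto (fun k => Fobj Ω X lam (A k) (B k)) atTop (nhds finf) ∧
      Tendsto η atTop (nhds 0) ∧
      ∀ K : ℕ, 1 ≤ K → ∃ k : ℕ, 1 ≤ k ∧ k ≤ K ∧
        η k ≤ (Fobj Ω X lam (A 1) (B 1) - finf) / K := by
  intro η
  have hηdef : ∀ k, η k =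
      (1 / 2) * (frobSq ((A k - A (k + 1)) * (B k)ᵀ) +
          frobSq (A (k + 1) * (B k - B (k + 1))ᵀ)) +
      (lam / 2) * (frobSq (A k - A (k + 1)) + frobSq (B k - B (k + 1))) := fun _ => rfl
  set F : ℕ → ℝ := fun k => Fobj Ω X lam (A k) (B k) with hFdef
  -- the key per-step decrease inequality
  have step : ∀ k, F (k + 1) + η k ≤ F k := by
    intro k
    obtain ⟨hA, hB⟩ := hALS k
    have gapA := QA_gap Ω X lam hlam (A k) (A (k + 1)) (B k) hA (A k)
    have gapB := QB_gap Ω X lam hlam (A (k + 1)) (B k) (B (k + 1)) hB (B k)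
    have e1 : QA Ω X lam (A k) (A k) (B k) = F k := QA_self Ω X lam (A k) (B k)
    have e2 : QB Ω X lam (B k) (A (k + 1)) (B k) = Fobj Ω X lam (A (k + 1)) (B k) :=
      QB_self Ω X lam (A (k + 1)) (B k)
    have i1 : Fobj Ω X lam (A (k + 1)) (B k) ≤ QA Ω X lam (A (k + 1)) (A k) (B k) :=
      QA_ge_F Ω X lam (A (k + 1)) (A k) (B k)
    have i2 : F (k + 1) ≤ QB Ω X lam (B (k + 1)) (A (k + 1)) (B k) :=
      QB_ge_F Ω X lam (B (k + 1)) (A (k + 1)) (B k)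
    rw [hηdef k]
    linarith
  have hF_nonneg : ∀ k, 0 ≤ F k := fun k => Fobj_nonneg Ω X lam hlam (A k) (B k)
  have hη_nonneg : ∀ k, 0 ≤ η k := by
    intro k
    rw [hηdef k]
    have h1 := frobSq_nonneg ((A k - A (k + 1)) * (B k)ᵀ)
    have h2 := frobSq_nonneg (A (k + 1) * (B k - B (k + 1))ᵀ)
    have h3 := frobSq_nonneg (A k - A (k + 1))
    have h4 := frobSq_nonneg (B k - B (k + 1))
    nlinarith
  have hanti : Antitone F := antitone_nat_of_succ_le fun k => by
    have h1 := step k; have h2 := hη_nonneg k; linarith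
  have hbdd : BddBelow (Set.range F) := ⟨0, by rintro x ⟨k, rfl⟩; exact hF_nonneg k⟩
  set finf := ⨅ k, F k with hfinf
  have hconv : Tendsto F atTop (nhds finf) := tendsto_atTop_ciInf hanti hbdd
  have hfinf0 : 0 ≤ finf := le_ciInf hF_nonneg
  have hle : ∀ k, finf ≤ F k := fun k => ciInf_le hbdd k
  have hdiff : Tendsto (fun k => F k - F (k + 1)) atTop (nhds 0) := by
    have h2 : Tendsto (fun k => F (k + 1)) atTop (nhds finf) :=
      hconv.comp (tendsto_add_atTop_nat 1)
    simpa using hconv.sub h2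
  have hη_to : Tendsto η atTop (nhds 0) :=
    squeeze_zero hη_nonneg (fun k => by have := step k; linarith) hdiff
  refine ⟨finf, hfinf0, hanti, hconv, hη_to, ?_⟩
  intro K hK
  by_contra hcon
  push_neg at hcon
  have hK0 : (K : ℝ) ≠ 0 := Nat.cast_ne_zero.mpr (by omega)
  have tel : ∑ i ∈ Finset.range K, (F (i + 1) - F (i + 1 + 1)) = F 1 - F (K + 1) := by
    simpa using Finset.sum_range_sub' (fun i => F (i + 1)) K
  have hsum_le : ∑ i ∈ Finset.range K, η (i + 1) ≤ F 1 - finf := by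
    calc ∑ i ∈ Finset.range K, η (i + 1)
        ≤ ∑ i ∈ Finset.range K, (F (i + 1) - F (i + 1 + 1)) :=
          Finset.sum_le_sum fun i _ => by have := step (i + 1); linarith
      _ = F 1 - F (K + 1) := tel
      _ ≤ F 1 - finf := by have := hle (K + 1); linarith
  have hsum_gt : F 1 - finf < ∑ i ∈ Finset.range K, η (i + 1) := by
    have hne : (Finset.range K).Nonempty := Finset.nonempty_range_iff.mpr (by omega)
    calc F 1 - finf
        = ∑ _i ∈ Finset.range K, ((F 1 - finf) / K) := by
          rw [Finset.sum_const, Finset.card_range, nsmul_eq_mul]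
          field_simp
      _ < ∑ i ∈ Finset.range K, η (i + 1) :=
          Finset.sum_lt_sum_of_nonempty hne fun i hi =>
            hcon (i + 1) (by omega) (by simp only [Finset.mem_range] at hi; omega)
  linarith

end
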